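/- arXiv:1307.5709 — 3 statements merged into one kernel-verified Lean document; each statement's English description precedes it below -/
import Mathlib

section
/- Let X and Y be compact metric spaces, ω a finite Borel measure on X, F ⊆ C(X), and T : F → C_s(X,Y) a map that is continuous at φ ∈ F. If φⱼ ∈ F and φⱼ → φ uniformly on X, then the measures M_{T(φⱼ)} converge weakly to M_{T(φ)} on Y; in particular limsup_{j→∞} M_{T(φⱼ)}(K) ≤ M_{T(φ)}(K) for every compact K ⊆ Y and liminf_{j→∞} M_{T(φⱼ)}(G) ≥ M_{T(φ)}(G) for every open G ⊆ Y. -/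
/-!
Write `Aⱼ(E) = T(φⱼ)⁻¹(E)`. Continuity of `T` at `φ` says that a point lying in `Aⱼ(C)` for
infinitely many `j`, with `C` closed, lies in `T(φ)⁻¹(C)`. For compact `K` this places
`limsup Aⱼ(K)` inside `T(φ)⁻¹(K)`, and the closed sets `Aⱼ(K)` obey the reverse Fatou
inequality `limsup ω(Aⱼ(K)) ≤ ω(limsup Aⱼ(K))` because `ω` is finite. For open `G` and a point
`x` where `T(φ)(x) = {y}` with `y ∈ G`, applying the same fact to `C = Gᶜ` shows that `x` lies
in `Aⱼ(G)` for all large `j`; as `T(φ)` is single-valued a.e., `T(φ)⁻¹(G) ⊆ liminf Aⱼ(G)` up to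
a null set, and Fatou's inequality `ω(liminf Aⱼ(G)) ≤ liminf ω(Aⱼ(G))` concludes.
-/

open Filter MeasureTheory Topology

/-- `Φ⁻¹(E) = {x : Φ(x) ∩ E ≠ ∅}` for a set-valued map `Φ`. -/
def SVPreimage {X Y : Type*} (Φ : X → Set Y) (E : Set Y) : Set X :=
  {x | (Φ x ∩ E).Nonempty}

/-- Continuity of a set-valued map at a point. -/
def SVContinuousAt {X Y : Type*} [TopologicalSpace X] [TopologicalSpace Y]
    (Φ : X → Set Y) (x₀ : X) : Prop :=
  ∀ (xk : ℕ → X) (yk : ℕ → Y), Tendsto xk atTop (nhds x₀) → (∀ k, yk k ∈ Φ (xk k)) →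
    ∃ (s : ℕ → ℕ) (y₀ : Y), StrictMono s ∧ y₀ ∈ Φ x₀ ∧ Tendsto (yk ∘ s) atTop (nhds y₀)

/-- `Φ ∈ C_s(X,Y)`: nonempty values, continuous everywhere, single-valued `ω`-a.e.,
and surjective. -/
def IsCs {X Y : Type*} [TopologicalSpace X] [TopologicalSpace Y] [MeasurableSpace X]
    (ω : Measure X) (Φ : X → Set Y) : Prop :=
  (∀ x, (Φ x).Nonempty) ∧ (∀ x, SVContinuousAt Φ x) ∧
    (∀ᵐ x ∂ω, ∃ y, Φ x = {y}) ∧ (⋃ x, Φ x) = Set.univ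

/-- Continuity of `T : F → C_s(X,Y)` at `φ ∈ F` (Definition 2.2). -/
def TContinuousAt {X Y : Type*} [TopologicalSpace X] [TopologicalSpace Y]
    (F : Set C(X, ℝ)) (T : C(X, ℝ) → X → Set Y) (φ : C(X, ℝ)) : Prop :=
  ∀ φs : ℕ → C(X, ℝ), (∀ j, φs j ∈ F) →
    TendstoUniformly (fun j x => φs j x) (fun x => φ x) atTop →
    ∀ (x₀ : X) (ys : ℕ → Y), (∀ j, ys j ∈ T (φs j) x₀) →
      ∃ (s : ℕ → ℕ) (y₀ : Y), StrictMono s ∧ y₀ ∈ T φ x₀ ∧ Tendsto (ys ∘ s) atTop (nhds y₀)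

open Set

section MeasureLimits

variable {α : Type*} [MeasurableSpace α] (μ : Measure α) (s : ℕ → Set α)

theorem measure_liminf_atTop_le_liminf_measure :
    μ (liminf s atTop) ≤ liminf (fun n => μ (s n)) atTop := by
  have hmono : Monotone fun n => ⋂ i ≥ n, s i := fun _ _ hmn =>
    biInter_subset_biInter_left fun _ hi => le_trans hmn hi
  simp only [liminf_eq_iSup_iInf_of_nat, iSup_eq_iUnion, iInf_eq_iInter]
  rw [hmono.measure_iUnion]
  exact iSup_mono fun n => le_iInf₂ fun i hi => measure_mono (biInter_subset_of_mem hi)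

theorem limsup_measure_le_measure_limsup_atTop [IsFiniteMeasure μ]
    (hs : ∀ n, NullMeasurableSet (s n) μ) :
    limsup (fun n => μ (s n)) atTop ≤ μ (limsup s atTop) := by
  have hanti : Antitone fun n => ⋃ i ≥ n, s i := fun _ _ hmn =>
    biUnion_subset_biUnion_left fun _ hi => le_trans hmn hi
  have hmeas : ∀ n, NullMeasurableSet (⋃ i ≥ n, s i) μ := fun n =>
    .biUnion (to_countable _) fun i _ => hs i
  simp only [limsup_eq_iInf_iSup_of_nat, iSup_eq_iUnion, iInf_eq_iInter]
  rw [hanti.measure_iInter hmeas ⟨0, measure_ne_top μ _⟩]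
  exact iInf_mono fun n => iSup₂_le fun i hi => measure_mono (subset_biUnion_of_mem hi)

end MeasureLimits

section SetValued

variable {X Y : Type*}

theorem mem_svPreimage_iff_of_eq_singleton {Φ : X → Set Y} {x : X} {y : Y} (h : Φ x = {y})
    {E : Set Y} : x ∈ SVPreimage Φ E ↔ y ∈ E := by
  simp [SVPreimage, h]

theorem mem_svPreimage_compl_of_notMem {Φ : X → Set Y} {x : X} (hx : (Φ x).Nonempty)
    {E : Set Y} (h : x ∉ SVPreimage Φ E) : x ∈ SVPreimage Φ Eᶜ := by
  obtain ⟨y, hy⟩ := hx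
  exact ⟨y, hy, fun hyE => h ⟨y, hy, hyE⟩⟩

theorem isClosed_svPreimage [TopologicalSpace X] [SequentialSpace X] [TopologicalSpace Y]
    {Φ : X → Set Y} (hΦ : ∀ x, SVContinuousAt Φ x) {C : Set Y} (hC : IsClosed C) :
    IsClosed (SVPreimage Φ C) := by
  refine IsSeqClosed.isClosed fun xs x hxs hx => ?_
  choose ys hys using hxs
  obtain ⟨s, y₀, -, hy₀, hlim⟩ := hΦ x xs ys hx fun n => (hys n).1
  exact ⟨y₀, hy₀, hC.mem_of_tendsto hlim (.of_forall fun k => (hys (s k)).2)⟩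

end SetValued

namespace TContinuousAt

variable {X Y : Type*} [TopologicalSpace X] [TopologicalSpace Y]
  {F : Set C(X, ℝ)} {T : C(X, ℝ) → X → Set Y} {φ : C(X, ℝ)} {φs : ℕ → C(X, ℝ)}

theorem mem_svPreimage_of_frequently (hT : TContinuousAt F T φ) (hφs : ∀ j, φs j ∈ F)
    (hconv : TendstoUniformly (fun j x => φs j x) (fun x => φ x) atTop)
    {C : Set Y} (hC : IsClosed C) {x : X} (hx : ∃ᶠ j in atTop, x ∈ SVPreimage (T (φs j)) C) :
    x ∈ SVPreimage (T φ) C := by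
  obtain ⟨s, hs, hxs⟩ := extraction_of_frequently_atTop hx
  choose ys hys using hxs
  have hconv_s := tendstoUniformly_iff_seq_tendstoUniformly.1 hconv s hs.tendsto_atTop
  obtain ⟨t, y₀, -, hy₀, hlim⟩ :=
    hT (fun k => φs (s k)) (fun k => hφs (s k)) hconv_s x ys fun k => (hys k).1
  exact ⟨y₀, hy₀, hC.mem_of_tendsto hlim (.of_forall fun k => (hys (t k)).2)⟩

theorem eventually_mem_svPreimage (hT : TContinuousAt F T φ) (hφs : ∀ j, φs j ∈ F)
    (hconv : TendstoUniformly (fun j x => φs j x) (fun x => φ x) atTop)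
    (hne : ∀ j x, (T (φs j) x).Nonempty) {G : Set Y} (hG : IsOpen G) {x : X} {y : Y}
    (hy : T φ x = {y}) (hyG : y ∈ G) :
    ∀ᶠ j in atTop, x ∈ SVPreimage (T (φs j)) G := by
  by_contra hnot
  have hcompl : ∃ᶠ j in atTop, x ∈ SVPreimage (T (φs j)) Gᶜ :=
    (not_eventually.1 hnot).mono fun j hj => mem_svPreimage_compl_of_notMem (hne j x) hj
  have := hT.mem_svPreimage_of_frequently hφs hconv hG.isClosed_compl hcompl
  exact (mem_svPreimage_iff_of_eq_singleton hy).1 this hyG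

end TContinuousAt

theorem stmt1_general {X Y : Type*} [MetricSpace X] [MetricSpace Y]
    [MeasurableSpace X] [BorelSpace X]
    (ω : Measure X) [IsFiniteMeasure ω]
    (F : Set C(X, ℝ)) (T : C(X, ℝ) → X → Set Y)
    (hTCs : ∀ f ∈ F, IsCs ω (T f))
    (φ : C(X, ℝ)) (hφ : φ ∈ F) (hTcont : TContinuousAt F T φ)
    (φs : ℕ → C(X, ℝ)) (hφs : ∀ j, φs j ∈ F)
    (hconv : TendstoUniformly (fun j x => φs j x) (fun x => φ x) atTop) :
    (∀ K : Set Y, IsCompact K →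
      limsup (fun j => ω (SVPreimage (T (φs j)) K)) atTop ≤ ω (SVPreimage (T φ) K)) ∧
    (∀ G : Set Y, IsOpen G →
      ω (SVPreimage (T φ) G) ≤ liminf (fun j => ω (SVPreimage (T (φs j)) G)) atTop) := by
  constructor
  · intro K hK
    have hmeas (j : ℕ) : NullMeasurableSet (SVPreimage (T (φs j)) K) ω :=
      (isClosed_svPreimage (hTCs _ (hφs j)).2.1 hK.isClosed).nullMeasurableSet
    calc limsup (fun j => ω (SVPreimage (T (φs j)) K)) atTop
        ≤ ω (limsup (fun j => SVPreimage (T (φs j)) K) atTop) :=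
          limsup_measure_le_measure_limsup_atTop ω _ hmeas
      _ ≤ ω (SVPreimage (T φ) K) := measure_mono fun x hx =>
          hTcont.mem_svPreimage_of_frequently hφs hconv hK.isClosed
            (mem_limsup_iff_frequently_mem.1 hx)
  · intro G hG
    have hne (j : ℕ) (x : X) : (T (φs j) x).Nonempty := (hTCs _ (hφs j)).1 x
    calc ω (SVPreimage (T φ) G)
        ≤ ω (liminf (fun j => SVPreimage (T (φs j)) G) atTop) := by
          refine measure_mono_ae ?_
          filter_upwards [(hTCs φ hφ).2.2.1] with x ⟨y, hy⟩ hx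
          exact mem_liminf_iff_eventually_mem.2 <| hTcont.eventually_mem_svPreimage hφs hconv
            hne hG hy ((mem_svPreimage_iff_of_eq_singleton hy).1 hx)
      _ ≤ liminf (fun j => ω (SVPreimage (T (φs j)) G)) atTop :=
          measure_liminf_atTop_le_liminf_measure ω _

/-- Lemma 2.3: if `T` is continuous at `φ` and `φⱼ → φ` uniformly, then
`M_{T(φⱼ)} → M_{T(φ)}` weakly: `limsup M_{T(φⱼ)}(K) ≤ M_{T(φ)}(K)` for compact `K` and
`liminf M_{T(φⱼ)}(G) ≥ M_{T(φ)}(G)` for open `G`. -/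
theorem stmt1 {X Y : Type*} [MetricSpace X] [CompactSpace X] [MetricSpace Y] [CompactSpace Y]
    [MeasurableSpace X] [BorelSpace X]
    (ω : Measure X) [IsFiniteMeasure ω]
    (F : Set C(X, ℝ)) (T : C(X, ℝ) → X → Set Y)
    (hTCs : ∀ f ∈ F, IsCs ω (T f))
    (φ : C(X, ℝ)) (hφ : φ ∈ F) (hTcont : TContinuousAt F T φ)
    (φs : ℕ → C(X, ℝ)) (hφs : ∀ j, φs j ∈ F)
    (hconv : TendstoUniformly (fun j x => φs j x) (fun x => φ x) atTop) :
    (∀ K : Set Y, IsCompact K →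
      limsup (fun j => ω (SVPreimage (T (φs j)) K)) atTop ≤ ω (SVPreimage (T φ) K)) ∧
    (∀ G : Set Y, IsOpen G →
      ω (SVPreimage (T φ) G) ≤ liminf (fun j => ω (SVPreimage (T (φs j)) G)) atTop) :=
  stmt1_general ω F T hTCs φ hφ hTcont φs hφs hconv
end

section
/- Let X, Y be compact metric spaces, ω a finite Borel measure on X, p₁,…,p_N distinct points of Y and g₁,…,g_N > 0 with N ≥ 2. Let F ⊆ C⁺(X) and T : F → C_s(X,Y) be such that F is T-convex and condition (A3') holds. Assume ω(X) = Σᵢ gᵢ and that there exists (b₁⁰,…,b_N⁰) with bᵢ⁰ ∈ (α_{pᵢ},β_{pᵢ}) and h_{b₁⁰,p₁}(x) ≤ min_{2≤i≤N} h_{bᵢ⁰,pᵢ}(x) for all x ∈ X. Then there exist bᵢ ∈ (α_{pᵢ},β_{pᵢ}) for 2 ≤ i ≤ N such that, with b₁ = b₁⁰, the function ρ(x) = max_{1≤i≤N} h_{bᵢ,pᵢ}(x) satisfies M_{T(ρ)} = Σᵢ gᵢ δ_{pᵢ}. -/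
open Filter MeasureTheory Topology

/-!
For levels `b`, the `i`-th cell is where `h_{b_i,p_i}` attains `ρ_b = max_j h_{b_j,p_j}`. By (A2'),
`T(ρ_b)` contains `p_i` on the `i`-th cell; as `T(ρ_b)` is single-valued a.e. and the `p_i` are
distinct, the cells cover `X` and overlap in null sets, so `M_{T(ρ_b)} = Σ ω(cell_i) δ_{p_i}`.

It remains to find levels with `ω(cell_i) = g_i`. Raising `b_i` shrinks the `i`-th cell and enlarges
the others, so the map raising each `b_i` (`i ≥ 2`) as far as the `i`-th cell keeps mass `≥ g_i`
is monotone on a box of levels and has a fixed point (Knaster–Tarski). By continuity of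
`t ↦ h_{t,y}` the fixed point gives mass `≥ g_i` (from the left) and `≤ g_i` (from the right, ties
being null) to the `i`-th cell, unless `b_i` is stuck at `b_i⁰`; the domination hypothesis on `b⁰`
rules this out, since it would leave the first cell null. The first cell then gets the remaining
mass `g_1`.
-/

open Set Function
open scoped ENNReal

theorem ENNReal.le_of_sum_eq_sum_of_forall_ne_le {ι : Type*} [Fintype ι] {a m : ι → ℝ≥0∞}
    {i₀ : ι} (hsum : ∑ i, a i = ∑ i, m i) (hfin : ∑ i, m i ≠ ∞)
    (hle : ∀ i ≠ i₀, a i ≤ m i) : m i₀ ≤ a i₀ := by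
  classical
  rw [← Finset.add_sum_erase _ _ (Finset.mem_univ i₀),
    ← Finset.add_sum_erase _ m (Finset.mem_univ i₀)] at hsum
  rw [← Finset.add_sum_erase _ m (Finset.mem_univ i₀)] at hfin
  refine ENNReal.le_of_add_le_add_right (ENNReal.add_ne_top.1 hfin).2 ?_
  calc m i₀ + ∑ i ∈ Finset.univ.erase i₀, m i = a i₀ + ∑ i ∈ Finset.univ.erase i₀, a i := hsum.symm
    _ ≤ a i₀ + ∑ i ∈ Finset.univ.erase i₀, m i :=
      by gcongr with i hi; exact hle i (Finset.ne_of_mem_erase hi)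

theorem continuousOn_of_forall_abs_sub_le {f : ℝ → ℝ} {s : Set ℝ}
    (hf : ∀ t ∈ s, ∀ ε > 0, ∃ δ > 0, ∀ t' ∈ s, |t' - t| < δ → |f t' - f t| ≤ ε) :
    ContinuousOn f s := by
  refine Metric.continuousOn_iff.2 fun t ht ε hε => ?_
  obtain ⟨δ, hδ, hfδ⟩ := hf t ht (ε / 2) (half_pos hε)
  exact ⟨δ, hδ, fun t' ht' hdist => (hfδ t' ht' hdist).trans_lt (half_lt_self hε)⟩

theorem exists_pos_forall_le_of_pos {X : Type*} [TopologicalSpace X] [CompactSpace X]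
    (f : C(X, ℝ)) (hf : ∀ x, 0 < f x) : ∃ ε > 0, ∀ x, ε ≤ f x := by
  rcases isEmpty_or_nonempty X with hX | hX
  · exact ⟨1, one_pos, isEmptyElim⟩
  · obtain ⟨x₀, -, hx₀⟩ := isCompact_univ.exists_isMinOn univ_nonempty f.continuous.continuousOn
    exact ⟨f x₀, hf x₀, fun x => hx₀ (mem_univ x)⟩

section SetValued

variable {X Y ι : Type*} [MeasurableSpace X] {ω : Measure X} {Φ : X → Set Y} {p : ι → Y}
  {C : ι → Set X}

theorem pairwise_aedisjoint_of_ae_singleton (hΦ : ∀ᵐ x ∂ω, ∃ y, Φ x = {y})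
    (hp : Injective p) (hC : ∀ i, ∀ x ∈ C i, p i ∈ Φ x) : Pairwise (AEDisjoint ω on C) := by
  intro i j hij
  refine measure_mono_null (fun x hx => ?_) (ae_iff.1 hΦ)
  rintro ⟨y, hy⟩
  refine hij (hp ?_)
  have hi := hC i x hx.1
  have hj := hC j x hx.2
  rw [hy, mem_singleton_iff] at hi hj
  exact hi.trans hj.symm

theorem measure_svPreimage_eq_sum [Fintype ι] (hΦ : ∀ᵐ x ∂ω, ∃ y, Φ x = {y})
    (hC : ∀ i, ∀ x ∈ C i, p i ∈ Φ x) (hcover : ⋃ i, C i = univ)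
    (hdisj : Pairwise (AEDisjoint ω on C)) (hmeas : ∀ i, NullMeasurableSet (C i) ω)
    (E : Set Y) : ω (SVPreimage Φ E) = ∑ i, E.indicator (fun _ => ω (C i)) (p i) := by
  classical
  have hae : SVPreimage Φ E =ᵐ[ω] ⋃ i ∈ Finset.univ.filter (fun i => p i ∈ E), C i := by
    refine eventuallyEq_set.2 (hΦ.mono fun x ⟨y, hy⟩ => ?_)
    have hpy : ∀ i, x ∈ C i → p i = y := fun i hi => by simpa [hy] using hC i x hi
    obtain ⟨i, hi⟩ := mem_iUnion.1 (hcover.symm ▸ mem_univ x)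
    simp only [SVPreimage, mem_ofPred_eq, hy, singleton_inter_nonempty, mem_iUnion,
      Finset.mem_filter, Finset.mem_univ, true_and, exists_prop]
    exact ⟨fun hyE => ⟨i, hpy i hi ▸ hyE, hi⟩, fun ⟨j, hjE, hj⟩ => hpy j hj ▸ hjE⟩
  rw [measure_congr hae, measure_biUnion_finset₀ (hdisj.set_pairwise _) fun i _ => hmeas i,
    Finset.sum_filter]
  simp only [indicator_apply]

end SetValued

section LevelCell

variable {X ι : Type*} [TopologicalSpace X]

/-- `levelCell u b i (b i)` is the set where the `i`-th term attains `max_j u j (b j)`. -/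
def levelCell (u : ι → ℝ → C(X, ℝ)) (b : ι → ℝ) (i : ι) (t : ℝ) : Set X :=
  {x | ∀ j ≠ i, u j (b j) x ≤ u i t x}

variable {u : ι → ℝ → C(X, ℝ)} {b : ι → ℝ} {i : ι} {t : ℝ}

theorem isClosed_levelCell : IsClosed (levelCell u b i t) := by
  simp only [levelCell, ofPred_forall]
  exact isClosed_iInter fun j => isClosed_iInter fun _ => isClosed_le (by fun_prop) (by fun_prop)

theorem iUnion_levelCell_eq_univ [Finite ι] [Nonempty ι] (u : ι → ℝ → C(X, ℝ)) (b : ι → ℝ) :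
    ⋃ i, levelCell u b i (b i) = univ := by
  refine eq_univ_of_forall fun x => ?_
  obtain ⟨i, hi⟩ := Finite.exists_max fun j => u j (b j) x
  exact mem_iUnion.2 ⟨i, fun j _ => hi j⟩

theorem mem_levelCell_of_eq {x : X} {j : ι} (hx : x ∈ levelCell u b i (b i))
    (hij : u j (b j) x = u i (b i) x) : x ∈ levelCell u b j (b j) := by
  intro k hk
  rw [hij]
  by_cases hki : k = i
  · rw [hki]
  · exact hx k hki

theorem levelCell_eq_empty_of_lt {i₀ : ι} (hi : i ≠ i₀) (hlt : ∀ x, u i t x < u i₀ (b i₀) x) :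
    levelCell u b i t = ∅ :=
  eq_empty_of_forall_notMem fun x hx => (hlt x).not_ge (hx i₀ hi.symm)

theorem levelCell_subset_levelCell_of_forall_le {i₀ : ι}
    (hle : ∀ x, u i₀ (b i₀) x ≤ u i (b i) x) :
    levelCell u b i₀ (b i₀) ⊆ levelCell u b i (b i) := fun x hx k _ => by
  rcases eq_or_ne k i₀ with rfl | hk₀
  exacts [hle x, (hx k hk₀).trans (hle x)]

theorem sup'_apply_le_of_mem_levelCell [Fintype ι] [Nonempty ι] {x : X}
    (hx : x ∈ levelCell u b i (b i)) :
    (Finset.univ.sup' Finset.univ_nonempty fun j => u j (b j)) x ≤ u i (b i) x := by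
  rw [ContinuousMap.sup'_apply]
  refine Finset.sup'_le _ _ fun j _ => ?_
  rcases eq_or_ne j i with rfl | hj
  exacts [le_rfl, hx j hj]

variable {lo hi : ι → ℝ}

theorem levelCell_subset_levelCell_of_le
    (hanti : ∀ j x, AntitoneOn (fun t => u j t x) (Icc (lo j) (hi j)))
    {b' : ι → ℝ} (hb : b ∈ Icc lo hi) (hb' : b' ∈ Icc lo hi) (hle : b ≤ b') :
    levelCell u b i t ⊆ levelCell u b' i t := fun x hx j hj =>
  (hanti j x ⟨hb.1 j, hb.2 j⟩ ⟨hb'.1 j, hb'.2 j⟩ (hle j)).trans (hx j hj)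

theorem levelCell_subset_levelCell_of_ge
    (hanti : ∀ j x, AntitoneOn (fun t => u j t x) (Icc (lo j) (hi j)))
    {t' : ℝ} (ht : t ∈ Icc (lo i) (hi i)) (ht' : t' ∈ Icc (lo i) (hi i)) (hle : t ≤ t') :
    levelCell u b i t' ⊆ levelCell u b i t := fun x hx j hj =>
  (hx j hj).trans (hanti i x ht ht' hle)

theorem tendsto_apply_of_tendsto
    (hcont : ∀ j x, ContinuousOn (fun t => u j t x) (Icc (lo j) (hi j)))
    {v : ℕ → ℝ} (hv : ∀ n, v n ∈ Icc (lo i) (hi i)) (ht : t ∈ Icc (lo i) (hi i))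
    (hvt : Tendsto v atTop (𝓝 t)) (x : X) :
    Tendsto (fun n => u i (v n) x) atTop (𝓝 (u i t x)) :=
  ((hcont i x) t ht).tendsto.comp (tendsto_nhdsWithin_iff.2 ⟨hvt, .of_forall hv⟩)

theorem mem_levelCell_of_tendsto
    (hcont : ∀ j x, ContinuousOn (fun t => u j t x) (Icc (lo j) (hi j)))
    {v : ℕ → ℝ} (hv : ∀ n, v n ∈ Icc (lo i) (hi i)) (ht : t ∈ Icc (lo i) (hi i))
    (hvt : Tendsto v atTop (𝓝 t)) {x : X}
    (hx : ∀ n, x ∈ levelCell u b i (v n)) : x ∈ levelCell u b i t := fun j hj =>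
  ge_of_tendsto' (tendsto_apply_of_tendsto hcont hv ht hvt x) fun n => hx n j hj

variable [MeasurableSpace X] {ω : Measure X}

theorem le_measure_levelCell_sSup [OpensMeasurableSpace X] [IsFiniteMeasure ω]
    (hanti : ∀ j x, AntitoneOn (fun t => u j t x) (Icc (lo j) (hi j)))
    (hcont : ∀ j x, ContinuousOn (fun t => u j t x) (Icc (lo j) (hi j)))
    {S : Set ℝ} (hS : S ⊆ Icc (lo i) (hi i)) (hSne : S.Nonempty) {M : ℝ≥0∞}
    (hM : ∀ t ∈ S, M ≤ ω (levelCell u b i t)) :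
    M ≤ ω (levelCell u b i (sSup S)) := by
  have hbdd : BddAbove S := ⟨hi i, fun t ht => (hS ht).2⟩
  have hsup : sSup S ∈ Icc (lo i) (hi i) :=
    ⟨(hS hSne.some_mem).1.trans (le_csSup hbdd hSne.some_mem), csSup_le hSne fun t ht => (hS ht).2⟩
  obtain ⟨v, hvmono, hvlim, hvS⟩ := exists_seq_tendsto_sSup hSne hbdd
  have hcells : Antitone fun n => levelCell u b i (v n) := fun n k hnk =>
    levelCell_subset_levelCell_of_ge hanti (hS (hvS n)) (hS (hvS k)) (hvmono hnk)
  calc M ≤ ⨅ n, ω (levelCell u b i (v n)) := le_iInf fun n => hM _ (hvS n)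
    _ = ω (⋂ n, levelCell u b i (v n)) :=
      (hcells.measure_iInter (fun _ => isClosed_levelCell.nullMeasurableSet)
        ⟨0, measure_ne_top _ _⟩).symm
    _ ≤ ω (levelCell u b i (sSup S)) := measure_mono fun x hx =>
      mem_levelCell_of_tendsto hcont (fun n => hS (hvS n)) hsup hvlim (mem_iInter.1 hx)

theorem measure_levelCell_le_of_forall_gt [Finite ι]
    (hanti : ∀ j x, AntitoneOn (fun t => u j t x) (Icc (lo j) (hi j)))
    (hcont : ∀ j x, ContinuousOn (fun t => u j t x) (Icc (lo j) (hi j)))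
    (hdisj : Pairwise (AEDisjoint ω on fun j => levelCell u b j (b j)))
    (hbi : b i ∈ Icc (lo i) (hi i)) (hlt : b i < hi i) {M : ℝ≥0∞}
    (hM : ∀ t ∈ Ioc (b i) (hi i), ω (levelCell u b i t) ≤ M) :
    ω (levelCell u b i (b i)) ≤ M := by
  obtain ⟨s, hsanti, hsmem, hslim⟩ := exists_seq_strictAnti_tendsto' hlt
  have hsIcc : ∀ n, s n ∈ Icc (lo i) (hi i) := fun n =>
    ⟨hbi.1.trans (hsmem n).1.le, (hsmem n).2.le⟩
  have hcells : Monotone fun n => levelCell u b i (s n) := fun n k hnk =>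
    levelCell_subset_levelCell_of_ge hanti (hsIcc k) (hsIcc n) (hsanti.antitone hnk)
  have hoff : ∀ᵐ x ∂ω, ∀ j, j ≠ i → x ∉ levelCell u b i (b i) ∩ levelCell u b j (b j) := by
    refine ae_all_iff.2 fun j => ?_
    by_cases hj : j = i
    · exact .of_forall fun _ h => (h hj).elim
    · exact (measure_eq_zero_iff_ae_notMem.1 (hdisj (Ne.symm hj))).mono fun x hx _ => hx
  have hae : levelCell u b i (b i) ≤ᵐ[ω] ⋃ n, levelCell u b i (s n) := by
    filter_upwards [hoff] with x hx hxi
    -- a tie `u j (b j) x = u i (b i) x` would put `x` in the null overlap with the `j`-th cell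
    have hstrict : ∀ j ≠ i, u j (b j) x < u i (b i) x := fun j hj =>
      (hxi j hj).lt_of_ne fun heq => hx j hj ⟨hxi, mem_levelCell_of_eq hxi heq⟩
    have hlim := tendsto_apply_of_tendsto hcont hsIcc hbi hslim x
    have hev : ∀ᶠ n in atTop, x ∈ levelCell u b i (s n) := by
      refine eventually_all.2 fun j => ?_
      by_cases hj : j = i
      · exact .of_forall fun _ h => (h hj).elim
      · exact (hlim.eventually (lt_mem_nhds (hstrict j hj))).mono fun _ hn _ => hn.le
    exact mem_iUnion.2 hev.exists
  calc ω (levelCell u b i (b i)) ≤ ω (⋃ n, levelCell u b i (s n)) := measure_mono_ae hae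
    _ = ⨆ n, ω (levelCell u b i (s n)) := hcells.measure_iUnion
    _ ≤ M := iSup_le fun n => hM _ ⟨(hsmem n).1, (hsmem n).2.le⟩

end LevelCell

section Equilibrium

variable {X ι : Type*} [TopologicalSpace X] [MeasurableSpace X]
  (ω : Measure X) (u : ι → ℝ → C(X, ℝ)) (lo hi : ι → ℝ) (m : ι → ℝ≥0∞)

def massLevels (b : ι → ℝ) (i : ι) : Set ℝ :=
  {t ∈ Icc (lo i) (hi i) | m i ≤ ω (levelCell u b i t)}

noncomputable def raiseLevels (b : ι → ℝ) : ι → ℝ :=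
  fun i => sSup (insert (lo i) (massLevels ω u lo hi m b i))

variable {ω u lo hi m}

theorem insert_massLevels_subset (hlohi : lo ≤ hi) (b : ι → ℝ) (i : ι) :
    insert (lo i) (massLevels ω u lo hi m b i) ⊆ Icc (lo i) (hi i) :=
  insert_subset ⟨le_rfl, hlohi i⟩ fun _ ht => ht.1

theorem bddAbove_insert_massLevels (hlohi : lo ≤ hi) (b : ι → ℝ) (i : ι) :
    BddAbove (insert (lo i) (massLevels ω u lo hi m b i)) :=
  bddAbove_Icc.mono (insert_massLevels_subset hlohi b i)

theorem raiseLevels_mem_Icc (hlohi : lo ≤ hi) (b : ι → ℝ) :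
    raiseLevels ω u lo hi m b ∈ Icc lo hi :=
  ⟨fun i => le_csSup (bddAbove_insert_massLevels hlohi b i) (mem_insert _ _),
    fun i => csSup_le (insert_nonempty _ _) fun _ ht => (insert_massLevels_subset hlohi b i ht).2⟩

theorem raiseLevels_mono (hlohi : lo ≤ hi)
    (hanti : ∀ j x, AntitoneOn (fun t => u j t x) (Icc (lo j) (hi j)))
    {b b' : ι → ℝ} (hb : b ∈ Icc lo hi) (hb' : b' ∈ Icc lo hi) (hle : b ≤ b') :
    raiseLevels ω u lo hi m b ≤ raiseLevels ω u lo hi m b' := fun i =>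
  csSup_le_csSup (bddAbove_insert_massLevels hlohi b' i) (insert_nonempty _ _)
    (insert_subset_insert fun _ ht =>
      ⟨ht.1, ht.2.trans (measure_mono (levelCell_subset_levelCell_of_le hanti hb hb' hle))⟩)

theorem exists_raiseLevels_eq (hlohi : lo ≤ hi)
    (hanti : ∀ j x, AntitoneOn (fun t => u j t x) (Icc (lo j) (hi j))) :
    ∃ b ∈ Icc lo hi, raiseLevels ω u lo hi m b = b := by
  have : Fact (lo ≤ hi) := ⟨hlohi⟩
  let G : Icc lo hi →o Icc lo hi :=
    ⟨fun b => ⟨raiseLevels ω u lo hi m b, raiseLevels_mem_Icc hlohi b⟩,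
      fun b b' hle => raiseLevels_mono hlohi hanti b.2 b'.2 hle⟩
  exact ⟨G.lfp, G.lfp.2, congrArg Subtype.val G.map_lfp⟩

variable {b : ι → ℝ} {i : ι}

theorem eq_lo_of_raiseLevels_eq (hfix : raiseLevels ω u lo hi m b = b)
    (hempty : massLevels ω u lo hi m b i = ∅) : b i = lo i := by
  rw [← congrFun hfix i, raiseLevels, hempty, insert_empty_eq, csSup_singleton]

theorem le_measure_of_raiseLevels_eq [OpensMeasurableSpace X] [IsFiniteMeasure ω]
    (hfix : raiseLevels ω u lo hi m b = b)
    (hanti : ∀ j x, AntitoneOn (fun t => u j t x) (Icc (lo j) (hi j)))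
    (hcont : ∀ j x, ContinuousOn (fun t => u j t x) (Icc (lo j) (hi j)))
    (hne : (massLevels ω u lo hi m b i).Nonempty) :
    m i ≤ ω (levelCell u b i (b i)) := by
  have hS : massLevels ω u lo hi m b i ⊆ Icc (lo i) (hi i) := fun _ ht => ht.1
  have hbdd := bddAbove_Icc.mono hS
  have hsup : b i = sSup (massLevels ω u lo hi m b i) := by
    rw [← congrFun hfix i, raiseLevels, csSup_insert hbdd hne,
      sup_eq_right.2 ((hS hne.some_mem).1.trans (le_csSup hbdd hne.some_mem))]
  rw [hsup]
  exact le_measure_levelCell_sSup hanti hcont hS hne fun _ ht => ht.2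

theorem measure_le_of_raiseLevels_eq [Finite ι] (hfix : raiseLevels ω u lo hi m b = b)
    (hanti : ∀ j x, AntitoneOn (fun t => u j t x) (Icc (lo j) (hi j)))
    (hcont : ∀ j x, ContinuousOn (fun t => u j t x) (Icc (lo j) (hi j)))
    (hdisj : Pairwise (AEDisjoint ω on fun j => levelCell u b j (b j)))
    (hb : b ∈ Icc lo hi) (hlt : b i < hi i) :
    ω (levelCell u b i (b i)) ≤ m i := by
  refine measure_levelCell_le_of_forall_gt hanti hcont hdisj ⟨hb.1 i, hb.2 i⟩ hlt
    fun t ht => le_of_not_gt fun hmt => ht.1.not_ge ?_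
  calc t ≤ raiseLevels ω u lo hi m b i :=
        le_csSup (bddAbove_Icc.mono (insert_massLevels_subset (hb.1.trans hb.2) b i))
          (mem_insert_of_mem _ ⟨⟨(hb.1 i).trans ht.1.le, ht.2⟩, hmt.le⟩)
    _ = b i := congrFun hfix i

theorem exists_measure_levelCell_eq [Fintype ι] [OpensMeasurableSpace X] [IsFiniteMeasure ω]
    {i₀ : ι} (hlohi : lo ≤ hi) (hi₀ : hi i₀ = lo i₀)
    (hanti : ∀ j x, AntitoneOn (fun t => u j t x) (Icc (lo j) (hi j)))
    (hcont : ∀ j x, ContinuousOn (fun t => u j t x) (Icc (lo j) (hi j)))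
    (hdisj : ∀ b ∈ Icc lo hi, Pairwise (AEDisjoint ω on fun j => levelCell u b j (b j)))
    (hdom : ∀ i x, u i₀ (lo i₀) x ≤ u i (lo i) x)
    (htop : ∀ i ≠ i₀, ∀ x, u i (hi i) x < u i₀ (lo i₀) x)
    (hm : ω univ = ∑ i, m i) (hm₀ : m i₀ ≠ 0) :
    ∃ b ∈ Icc lo hi, ∀ i, ω (levelCell u b i (b i)) = m i := by
  have : Nonempty ι := ⟨i₀⟩
  obtain ⟨b, hb, hfix⟩ := exists_raiseLevels_eq (m := m) hlohi hanti
  have hb₀ : b i₀ = lo i₀ := le_antisymm (hi₀ ▸ hb.2 i₀) (hb.1 i₀)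
  set C : ι → Set X := fun j => levelCell u b j (b j)
  have hsum : ∑ i, ω (C i) = ∑ i, m i := by
    rw [← hm, ← iUnion_levelCell_eq_univ u b, measure_iUnion₀ (hdisj b hb)
      (fun _ => isClosed_levelCell.nullMeasurableSet), tsum_fintype]
  have hfin : ∑ i, m i ≠ ∞ := hm ▸ measure_ne_top ω univ
  have hle : ∀ i ≠ i₀, ω (C i) ≤ m i := by
    intro i hi
    rcases (hb.2 i).lt_or_eq with hlt | hbi
    · exact measure_le_of_raiseLevels_eq hfix hanti hcont (hdisj b hb) hb hlt
    · have hempty : C i = ∅ := by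
        simp only [C, hbi]
        exact levelCell_eq_empty_of_lt hi fun x => hb₀ ▸ htop i hi x
      rw [hempty, measure_empty]
      exact zero_le
  have h₀ : m i₀ ≤ ω (C i₀) := ENNReal.le_of_sum_eq_sum_of_forall_ne_le hsum hfin hle
  -- a level stuck at `lo i` would, by `hdom`, make the `i₀`-th cell null
  have hne : ∀ i ≠ i₀, (massLevels ω u lo hi m b i).Nonempty := by
    intro i hi
    by_contra hempty
    have hbi := eq_lo_of_raiseLevels_eq hfix (not_nonempty_iff_eq_empty.1 hempty)
    have hsub : C i₀ ⊆ C i₀ ∩ C i := subset_inter subset_rfl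
      (levelCell_subset_levelCell_of_forall_le fun x => hb₀ ▸ hbi ▸ hdom i x)
    exact hm₀ (nonpos_iff_eq_zero.1
      (h₀.trans ((measure_mono hsub).trans_eq (hdisj b hb (Ne.symm hi)))))
  have heq : ∀ i ≠ i₀, ω (C i) = m i := fun i hi =>
    (hle i hi).antisymm (le_measure_of_raiseLevels_eq hfix hanti hcont (hne i hi))
  refine ⟨b, hb, fun i => ?_⟩
  rcases eq_or_ne i i₀ with rfl | hi
  · exact le_antisymm (ENNReal.le_of_sum_eq_sum_of_forall_ne_le hsum.symm (hsum ▸ hfin)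
      fun j hj => (heq j hj).ge) h₀
  · exact heq i hi

end Equilibrium

section TConvex

variable {X Y ι : Type*} [TopologicalSpace X] {F : Set C(X, ℝ)} {T : C(X, ℝ) → X → Set Y}

theorem subset_of_le_of_apply_le
    (hA2 : ∀ φ₁ ∈ F, ∀ φ₂ ∈ F, ∀ x₀ : X, φ₂ x₀ ≤ φ₁ x₀ → T φ₁ x₀ ⊆ T (φ₁ ⊔ φ₂) x₀)
    {φ ψ : C(X, ℝ)} (hφ : φ ∈ F) (hψ : ψ ∈ F) (hle : φ ≤ ψ) {x : X} (hx : ψ x ≤ φ x) :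
    T φ x ⊆ T ψ x := by
  simpa only [sup_eq_right.2 hle] using hA2 φ hφ ψ hψ x hx

theorem ae_singleton_and_mem_T_sup' [TopologicalSpace Y] [MeasurableSpace X] {ω : Measure X}
    [Fintype ι] [Nonempty ι]
    (hA1 : ∀ f₁ ∈ F, ∀ f₂ ∈ F, f₁ ⊔ f₂ ∈ F)
    (hA2 : ∀ φ₁ ∈ F, ∀ φ₂ ∈ F, ∀ x₀ : X, φ₂ x₀ ≤ φ₁ x₀ → T φ₁ x₀ ⊆ T (φ₁ ⊔ φ₂) x₀)
    (hTCs : ∀ f ∈ F, IsCs ω (T f)) {u : ι → ℝ → C(X, ℝ)} {b : ι → ℝ} {p : ι → Y}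
    (hF : ∀ j, u j (b j) ∈ F) (hT : ∀ j x, p j ∈ T (u j (b j)) x) :
    (∀ᵐ x ∂ω, ∃ y, T (Finset.univ.sup' Finset.univ_nonempty fun j => u j (b j)) x = {y}) ∧
      ∀ i, ∀ x ∈ levelCell u b i (b i),
        p i ∈ T (Finset.univ.sup' Finset.univ_nonempty fun j => u j (b j)) x := by
  have hρF : (Finset.univ.sup' Finset.univ_nonempty fun j => u j (b j)) ∈ F :=
    Finset.sup'_induction _ _ hA1 fun j _ => hF j
  exact ⟨(hTCs _ hρF).2.2.1, fun i x hx => subset_of_le_of_apply_le hA2 (hF i) hρF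
    (Finset.le_sup' (fun j => u j (b j)) (Finset.mem_univ i))
    (sup'_apply_le_of_mem_levelCell hx) (hT i x)⟩

end TConvex

theorem exists_upper_levels {X Y ι : Type*} [TopologicalSpace X] [CompactSpace X]
    [DecidableEq ι] {β : Y → EReal} {h : ℝ → Y → C(X, ℝ)} {p : ι → Y} {b0 : ι → ℝ}
    (hb0 : ∀ i, (b0 i : EReal) < β (p i))
    (hsmall : ∀ y, ∀ ε : ℝ, 0 < ε → ∃ t₀ : ℝ, (t₀ : EReal) < β y ∧
      ∀ t : ℝ, t₀ ≤ t → (t : EReal) < β y → ∀ x, h t y x < ε)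
    (i₀ : ι) (hpos : ∀ x, 0 < h (b0 i₀) (p i₀) x) :
    ∃ c : ι → ℝ, c i₀ = b0 i₀ ∧ b0 ≤ c ∧ (∀ i, (c i : EReal) < β (p i)) ∧
      ∀ i ≠ i₀, ∀ x, h (c i) (p i) x < h (b0 i₀) (p i₀) x := by
  obtain ⟨ε, hε, hεle⟩ := exists_pos_forall_le_of_pos _ hpos
  choose t₀ ht₀β ht₀small using fun i => hsmall (p i) ε hε
  have hmaxβ : ∀ i, ((max (t₀ i) (b0 i) : ℝ) : EReal) < β (p i) := fun i => by
    rcases max_choice (t₀ i) (b0 i) with hmax | hmax <;> rw [hmax]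
    exacts [ht₀β i, hb0 i]
  refine ⟨update (fun i => max (t₀ i) (b0 i)) i₀ (b0 i₀), update_self _ _ _,
    fun i => ?_, fun i => ?_, fun i hi x => ?_⟩
  · rcases eq_or_ne i i₀ with rfl | hi
    · rw [update_self]
    · rw [update_of_ne hi]
      exact le_max_right _ _
  · rcases eq_or_ne i i₀ with rfl | hi
    · rw [update_self]
      exact hb0 i
    · rw [update_of_ne hi]
      exact hmaxβ i
  · rw [update_of_ne hi]
    exact (ht₀small i _ (le_max_left _ _) (hmaxβ i) x).trans_le (hεle x)

theorem stmt5_general {X Y : Type*} [MetricSpace X] [CompactSpace X] [MetricSpace Y]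
    [MeasurableSpace X] [BorelSpace X] [MeasurableSpace Y]
    (ω : Measure X) [IsFiniteMeasure ω]
    (F : Set C(X, ℝ)) (T : C(X, ℝ) → X → Set Y)
    (α β : Y → EReal) (h : ℝ → Y → C(X, ℝ))
    -- F ⊆ C⁺(X)
    (hFpos : ∀ f ∈ F, ∀ x, 0 < f x)
    -- (A1')
    (hA1 : ∀ f₁ ∈ F, ∀ f₂ ∈ F, f₁ ⊔ f₂ ∈ F)
    -- T maps F into C_s(X,Y)
    (hTCs : ∀ f ∈ F, IsCs ω (T f))
    -- (A2')
    (hA2 : ∀ φ₁ ∈ F, ∀ φ₂ ∈ F, ∀ x₀ : X, φ₂ x₀ ≤ φ₁ x₀ → T φ₁ x₀ ⊆ T (φ₁ ⊔ φ₂) x₀)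
    -- (A3')
    (hA3mem : ∀ (y : Y) (t : ℝ), α y < (t : EReal) → (t : EReal) < β y → h t y ∈ F)
    (hA3a : ∀ (y : Y) (t : ℝ), α y < (t : EReal) → (t : EReal) < β y → ∀ x : X, y ∈ T (h t y) x)
    (hA3b : ∀ (y : Y) (t s : ℝ), α y < (t : EReal) → (s : EReal) < β y → t ≤ s →
      ∀ x, h s y x ≤ h t y x)
    (hA3c : ∀ (y : Y), ∀ ε : ℝ, 0 < ε → ∃ t₀ : ℝ, α y < (t₀ : EReal) ∧ (t₀ : EReal) < β y ∧
      ∀ t : ℝ, t₀ ≤ t → (t : EReal) < β y → ∀ x, h t y x < ε)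
    (hA3d : ∀ (y : Y) (t : ℝ), α y < (t : EReal) → (t : EReal) < β y →
      ∀ ε : ℝ, 0 < ε → ∃ δ : ℝ, 0 < δ ∧ ∀ t' : ℝ, α y < (t' : EReal) → (t' : EReal) < β y →
        |t' - t| < δ → ∀ x, |h t' y x - h t y x| ≤ ε)
    -- the data
    {N : ℕ} [NeZero N]
    (p : Fin N → Y) (hp : Function.Injective p)
    (g : Fin N → ℝ) (hg : ∀ i, 0 < g i)
    -- conservation of energy
    (hmass : ω Set.univ = ∑ i, ENNReal.ofReal (g i))
    -- there exists (b₁⁰,…,b_N⁰) with h_{b₁⁰,p₁} ≤ min_{2≤i≤N} h_{bᵢ⁰,pᵢ} on X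
    (b0 : Fin N → ℝ) (hb0 : ∀ i, α (p i) < (b0 i : EReal) ∧ (b0 i : EReal) < β (p i))
    (hb0dom : ∀ i : Fin N, i ≠ 0 → ∀ x, h (b0 0) (p 0) x ≤ h (b0 i) (p i) x) :
    ∃ b : Fin N → ℝ, b 0 = b0 0 ∧
      (∀ i, α (p i) < (b i : EReal) ∧ (b i : EReal) < β (p i)) ∧
      ∃ ρ : C(X, ℝ), (∀ x, ρ x = ⨆ i, h (b i) (p i) x) ∧
        ∀ E : Set Y, MeasurableSet E →
          ω (SVPreimage (T ρ) E) = ∑ i, E.indicator (fun _ => ENNReal.ofReal (g i)) (p i) := by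
  let u : Fin N → ℝ → C(X, ℝ) := fun i t => h t (p i)
  obtain ⟨c, hc₀, hb0c, hcβ, htop⟩ := exists_upper_levels (fun i => (hb0 i).2)
    (fun y ε hε => (hA3c y ε hε).imp fun _ ht => ht.2) 0 (hFpos _ (hA3mem _ _ (hb0 0).1 (hb0 0).2))
  have hadm : ∀ j, ∀ t ∈ Icc (b0 j) (c j), α (p j) < t ∧ t < β (p j) := fun j t ht =>
    ⟨(hb0 j).1.trans_le (EReal.coe_le_coe_iff.2 ht.1),
      (EReal.coe_le_coe_iff.2 ht.2).trans_lt (hcβ j)⟩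
  have hbadm : ∀ b ∈ Icc b0 c, ∀ j, α (p j) < b j ∧ b j < β (p j) := fun b hb j =>
    hadm j _ ⟨hb.1 j, hb.2 j⟩
  have hT := fun b (hb : b ∈ Icc b0 c) => ae_singleton_and_mem_T_sup' (ω := ω) (u := u) hA1 hA2
    hTCs (fun j => hA3mem _ _ (hbadm b hb j).1 (hbadm b hb j).2)
    (fun j => hA3a _ _ (hbadm b hb j).1 (hbadm b hb j).2)
  have hdisj : ∀ b ∈ Icc b0 c, Pairwise (AEDisjoint ω on fun j => levelCell u b j (b j)) :=
    fun b hb => pairwise_aedisjoint_of_ae_singleton (hT b hb).1 hp (hT b hb).2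
  obtain ⟨b, hb, hcellmass⟩ := exists_measure_levelCell_eq
    (m := fun i => ENNReal.ofReal (g i)) (i₀ := 0) hb0c hc₀
    (fun j x t ht s hs hts => hA3b (p j) t s (hadm j t ht).1 (hadm j s hs).2 hts x)
    (fun j x => continuousOn_of_forall_abs_sub_le fun t ht ε hε => by
      obtain ⟨δ, hδ, hδt⟩ := hA3d (p j) t (hadm j t ht).1 (hadm j t ht).2 ε hε
      exact ⟨δ, hδ, fun t' ht' hlt => hδt t' (hadm j t' ht').1 (hadm j t' ht').2 hlt x⟩)
    hdisj (fun i x => by rcases eq_or_ne i 0 with rfl | hi; exacts [le_rfl, hb0dom i hi x])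
    htop hmass (ENNReal.ofReal_pos.2 (hg 0)).ne'
  refine ⟨b, le_antisymm (hc₀ ▸ hb.2 0) (hb.1 0), hbadm b hb,
    Finset.univ.sup' Finset.univ_nonempty fun j => u j (b j), fun x => ?_, fun E _ => ?_⟩
  · rw [ContinuousMap.sup'_apply, Finset.sup'_univ_eq_ciSup]
  · rw [measure_svPreimage_eq_sum (hT b hb).1 (hT b hb).2 (iUnion_levelCell_eq_univ u b)
      (hdisj b hb) fun i => isClosed_levelCell.nullMeasurableSet]
    exact Finset.sum_congr rfl fun i _ => by rw [hcellmass i]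

/-- Theorem 2.9 (convex case, discrete target measure). -/
theorem stmt5 {X Y : Type*} [MetricSpace X] [CompactSpace X] [MetricSpace Y] [CompactSpace Y]
    [MeasurableSpace X] [BorelSpace X] [MeasurableSpace Y] [BorelSpace Y]
    (ω : Measure X) [IsFiniteMeasure ω]
    (F : Set C(X, ℝ)) (T : C(X, ℝ) → X → Set Y)
    (α β : Y → EReal) (h : ℝ → Y → C(X, ℝ))
    -- F ⊆ C⁺(X)
    (hFpos : ∀ f ∈ F, ∀ x, 0 < f x)
    -- (A1')
    (hA1 : ∀ f₁ ∈ F, ∀ f₂ ∈ F, f₁ ⊔ f₂ ∈ F)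
    -- T maps F into C_s(X,Y)
    (hTCs : ∀ f ∈ F, IsCs ω (T f))
    -- T is continuous at each φ ∈ F
    (hTcont : ∀ φ ∈ F, TContinuousAt F T φ)
    -- (A2')
    (hA2 : ∀ φ₁ ∈ F, ∀ φ₂ ∈ F, ∀ x₀ : X, φ₂ x₀ ≤ φ₁ x₀ → T φ₁ x₀ ⊆ T (φ₁ ⊔ φ₂) x₀)
    -- (A3')
    (hA3mem : ∀ (y : Y) (t : ℝ), α y < (t : EReal) → (t : EReal) < β y → h t y ∈ F)
    (hA3a : ∀ (y : Y) (t : ℝ), α y < (t : EReal) → (t : EReal) < β y → ∀ x : X, y ∈ T (h t y) x)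
    (hA3b : ∀ (y : Y) (t s : ℝ), α y < (t : EReal) → (s : EReal) < β y → t ≤ s →
      ∀ x, h s y x ≤ h t y x)
    (hA3c : ∀ (y : Y), ∀ ε : ℝ, 0 < ε → ∃ t₀ : ℝ, α y < (t₀ : EReal) ∧ (t₀ : EReal) < β y ∧
      ∀ t : ℝ, t₀ ≤ t → (t : EReal) < β y → ∀ x, h t y x < ε)
    (hA3d : ∀ (y : Y) (t : ℝ), α y < (t : EReal) → (t : EReal) < β y →
      ∀ ε : ℝ, 0 < ε → ∃ δ : ℝ, 0 < δ ∧ ∀ t' : ℝ, α y < (t' : EReal) → (t' : EReal) < β y →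
        |t' - t| < δ → ∀ x, |h t' y x - h t y x| ≤ ε)
    -- the data
    {N : ℕ} [NeZero N] (hN : 2 ≤ N)
    (p : Fin N → Y) (hp : Function.Injective p)
    (g : Fin N → ℝ) (hg : ∀ i, 0 < g i)
    -- conservation of energy
    (hmass : ω Set.univ = ∑ i, ENNReal.ofReal (g i))
    -- there exists (b₁⁰,…,b_N⁰) with h_{b₁⁰,p₁} ≤ min_{2≤i≤N} h_{bᵢ⁰,pᵢ} on X
    (b0 : Fin N → ℝ) (hb0 : ∀ i, α (p i) < (b0 i : EReal) ∧ (b0 i : EReal) < β (p i))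
    (hb0dom : ∀ i : Fin N, i ≠ 0 → ∀ x, h (b0 0) (p 0) x ≤ h (b0 i) (p i) x) :
    ∃ b : Fin N → ℝ, b 0 = b0 0 ∧
      (∀ i, α (p i) < (b i : EReal) ∧ (b i : EReal) < β (p i)) ∧
      ∃ ρ : C(X, ℝ), (∀ x, ρ x = ⨆ i, h (b i) (p i) x) ∧
        ∀ E : Set Y, MeasurableSet E →
          ω (SVPreimage (T ρ) E) = ∑ i, E.indicator (fun _ => ENNReal.ofReal (g i)) (p i) :=
  stmt5_general ω F T α β h hFpos hA1 hTCs hA2 hA3mem hA3a hA3b hA3c hA3d p hp g hg hmass b0 hb0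
    hb0dom
end

section
/- In the T-convex setting with (A3'), let μ_l be a sequence of finitely supported (discrete) Radon measures on Y converging weakly to a Radon measure μ, with μ_l(Y) = ω(X) for all l. For each l let ρ_l ∈ F be of the form ρ_l = max_{1≤i≤N_l} h_{bᵢˡ,pᵢˡ} and satisfy M_{T(ρ_l)} = μ_l. Assume there exists R₀ > 0 with R₀ in the range of ρ_l for every l and R₀ < lim_{t→α_y⁺} h_{t,y}(x) for all x ∈ X, y ∈ Y, and: (i) for each R₁ > 0 there is C_{R₁} > 0 such that whenever R₁ is in the range of some h_{t,y}, then C_{R₁}⁻¹ ≤ h_{t,y} ≤ C_{R₁} on X; (ii) for any C₁ > C₀ > 0 the family {f ∈ F : C₀ ≤ f ≤ C₁ on X} is compact in C(X). Then there exists ρ ∈ F with M_{T(ρ)} = μ. -/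
open Filter MeasureTheory Topology

/-!
By (i) at level `R₀` the approximate solutions are uniformly bounded, `C⁻¹ ≤ ρ_l ≤ C`: at a point
`x₀` with `ρ_l(x₀) = R₀` the component of the maximum attaining it takes the value `R₀`, and every
other component `h_{b,q}` lies below some `h_{t,q}` with `t ≤ b` and `h_{t,q}(x₀) = R₀`, found by
the intermediate value theorem in the parameter. By (ii) a subsequence converges uniformly to some
`ρ ∈ F`. Measurable selections `g_l` of `T(ρ_l)` and `g` of `T(ρ)` turn `M_{T(ρ_l)}` and `M_{T(ρ)}`
into push-forwards of `ω`; continuity of `T` gives `g_l → g` `ω`-a.e., so by dominated convergence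
the weak limit `μ` of `μ_l = g_l # ω` is `g # ω = M_{T(ρ)}`.
-/

section SetValued

variable {X Y : Type*} [TopologicalSpace X] [TopologicalSpace Y]

theorem SVContinuousAt.tendsto_of_eq_singleton {Φ : X → Set Y} {x₀ : X} {y₀ : Y}
    (hΦ : SVContinuousAt Φ x₀) (hx₀ : Φ x₀ = {y₀}) {xk : ℕ → X} {yk : ℕ → Y}
    (hxk : Tendsto xk atTop (𝓝 x₀)) (hyk : ∀ k, yk k ∈ Φ (xk k)) :
    Tendsto yk atTop (𝓝 y₀) := by
  refine tendsto_of_subseq_tendsto fun ns hns => ?_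
  obtain ⟨ms, y, -, hy, hlim⟩ := hΦ (xk ∘ ns) (yk ∘ ns) (hxk.comp hns) fun k => hyk (ns k)
  rw [hx₀, Set.mem_singleton_iff] at hy
  exact ⟨ms, hy ▸ hlim⟩

theorem SVContinuousAt.continuousAt_of_mem [FirstCountableTopology X] {Φ : X → Set Y}
    {g : X → Y} {x₀ : X} (hΦ : SVContinuousAt Φ x₀) (hg : ∀ x, g x ∈ Φ x)
    (hx₀ : Φ x₀ = {g x₀}) : ContinuousAt g x₀ :=
  tendsto_iff_seq_tendsto.2 fun _ hxk => hΦ.tendsto_of_eq_singleton hx₀ hxk fun _ => hg _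

theorem TContinuousAt.tendsto_of_eq_singleton [CompactSpace X] {F : Set C(X, ℝ)}
    {T : C(X, ℝ) → X → Set Y} {φ : C(X, ℝ)} (hT : TContinuousAt F T φ) {φs : ℕ → C(X, ℝ)}
    (hφsF : ∀ j, φs j ∈ F) (hφs : Tendsto φs atTop (𝓝 φ)) {x₀ : X} {y₀ : Y}
    (hx₀ : T φ x₀ = {y₀}) {ys : ℕ → Y} (hys : ∀ j, ys j ∈ T (φs j) x₀) :
    Tendsto ys atTop (𝓝 y₀) := by
  refine tendsto_of_subseq_tendsto fun ns hns => ?_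
  obtain ⟨ms, y, -, hy, hlim⟩ := hT (φs ∘ ns) (fun j => hφsF (ns j))
    (ContinuousMap.tendsto_iff_tendstoUniformly.1 (hφs.comp hns)) x₀ (ys ∘ ns) fun j => hys _
  rw [hx₀, Set.mem_singleton_iff] at hy
  exact ⟨ms, hy ▸ hlim⟩

theorem IsCs.exists_aemeasurable_selection [FirstCountableTopology X] [MeasurableSpace X]
    [OpensMeasurableSpace X] [MeasurableSpace Y] [BorelSpace Y] {ω : Measure X}
    {Φ : X → Set Y} (hΦ : IsCs ω Φ) :
    ∃ g : X → Y, AEMeasurable g ω ∧ (∀ x, g x ∈ Φ x) ∧ ∀ᵐ x ∂ω, Φ x = {g x} := by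
  obtain ⟨hne, hcont, hsingle, -⟩ := hΦ
  choose g hg using hne
  have hae : ∀ᵐ x ∂ω, Φ x = {g x} := hsingle.mono fun x ⟨y, hy⟩ => by
    have hgx := hg x
    rw [hy, Set.mem_singleton_iff] at hgx
    rw [hy, hgx]
  have hcontOn : ContinuousOn g {x | Φ x = {g x}} := fun x hx =>
    ((hcont x).continuousAt_of_mem hg hx).continuousWithinAt
  refine ⟨g, ?_, hg, hae⟩
  rw [← Measure.restrict_eq_self_of_ae_mem hae]
  exact hcontOn.aemeasurable₀ (nullMeasurableSet_univ.congr (eventuallyEq_univ.2 hae).symm)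

theorem map_apply_eq_measure_svPreimage {X Y : Type*} [MeasurableSpace X] [MeasurableSpace Y]
    {ω : Measure X} {Φ : X → Set Y} {g : X → Y} (hg : AEMeasurable g ω)
    (hΦ : ∀ᵐ x ∂ω, Φ x = {g x}) {E : Set Y} (hE : MeasurableSet E) :
    ω.map g E = ω (SVPreimage Φ E) := by
  rw [Measure.map_apply_of_aemeasurable hg hE]
  refine measure_congr (eventuallyEq_set.2 (hΦ.mono fun x hx => ?_))
  simp [SVPreimage, hx]

end SetValued

theorem AntitoneOn.exists_le_apply_eq_of_apply_le {α δ : Type*}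
    [ConditionallyCompleteLinearOrder α] [TopologicalSpace α] [OrderTopology α] [DenselyOrdered α]
    [LinearOrder δ] [TopologicalSpace δ] [OrderClosedTopology δ] {u : α → δ} {I : Set α} [I.OrdConnected]
    (hmono : AntitoneOn u I) (hcont : ContinuousOn u I) {a b : α} {R : δ} (ha : a ∈ I)
    (hb : b ∈ I) (haR : R < u a) (hbR : u b ≤ R) : ∃ t ∈ I, t ≤ b ∧ u t = R := by
  have hab : a ≤ b := le_of_not_ge fun hba => ((haR.trans_le (hmono hb ha hba)).trans_le hbR).false
  have hsub : Set.Icc a b ⊆ I := Set.Icc_subset I ha hb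
  obtain ⟨t, ht, htR⟩ := intermediate_value_Icc' hab (hcont.mono hsub) ⟨hbR, haR.le⟩
  exact ⟨t, hsub ht, ht.2, htR⟩

section Family

variable {X Y : Type*} [TopologicalSpace X] {h : ℝ → Y → C(X, ℝ)} {I : Y → Set ℝ}
  [∀ y, (I y).OrdConnected] {R C : ℝ}

theorem apply_le_of_apply_le_level (hmono : ∀ y x, AntitoneOn (fun t => h t y x) (I y))
    (hcont : ∀ y x, ContinuousOn (fun t => h t y x) (I y))
    (hR : ∀ x y, ∃ t ∈ I y, R < h t y x)
    (hC : ∀ y, ∀ t ∈ I y, (∃ x, h t y x = R) → ∀ x, C⁻¹ ≤ h t y x ∧ h t y x ≤ C)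
    {y : Y} {b : ℝ} (hb : b ∈ I y) {x₀ : X} (hbR : h b y x₀ ≤ R) (x : X) : h b y x ≤ C := by
  obtain ⟨a, ha, haR⟩ := hR x₀ y
  obtain ⟨t, ht, htb, htR⟩ :=
    (hmono y x₀).exists_le_apply_eq_of_apply_le (hcont y x₀) ha hb haR hbR
  exact (hmono y x ht hb htb).trans (hC y t ht ⟨x₀, htR⟩ x).2

theorem inv_le_and_le_of_eq_iSup {ι : Type*} [Finite ι] [Nonempty ι]
    (hmono : ∀ y x, AntitoneOn (fun t => h t y x) (I y))
    (hcont : ∀ y x, ContinuousOn (fun t => h t y x) (I y))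
    (hR : ∀ x y, ∃ t ∈ I y, R < h t y x)
    (hC : ∀ y, ∀ t ∈ I y, (∃ x, h t y x = R) → ∀ x, C⁻¹ ≤ h t y x ∧ h t y x ≤ C)
    {q : ι → Y} {b : ι → ℝ} (hb : ∀ i, b i ∈ I (q i)) {ρ : C(X, ℝ)}
    (hρ : ∀ x, ρ x = ⨆ i, h (b i) (q i) x) {x₀ : X} (hx₀ : ρ x₀ = R) (x : X) :
    C⁻¹ ≤ ρ x ∧ ρ x ≤ C := by
  obtain ⟨i₀, hi₀⟩ := Finite.exists_max fun i => h (b i) (q i) x₀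
  have hle : ∀ i, h (b i) (q i) x₀ ≤ R := fun i => by
    rw [← hx₀, hρ x₀]
    exact le_ciSup (Finite.bddAbove_range fun i => h (b i) (q i) x₀) i
  have hi₀R : h (b i₀) (q i₀) x₀ = R := by
    refine le_antisymm (hle i₀) ?_
    rw [← hx₀, hρ x₀]
    exact ciSup_le hi₀
  rw [hρ x]
  exact ⟨(hC _ _ (hb i₀) ⟨x₀, hi₀R⟩ x).1.trans
      (le_ciSup (Finite.bddAbove_range fun i => h (b i) (q i) x) i₀),
    ciSup_le fun i => apply_le_of_apply_le_level hmono hcont hR hC (hb i) (hle i) x⟩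

end Family

open scoped BoundedContinuousFunction in
theorem map_eq_of_tendsto_ae_of_tendsto_integral {X Y : Type*} [MeasurableSpace X]
    [PseudoMetricSpace Y] [MeasurableSpace Y] [BorelSpace Y]
    {ω : Measure X} [IsFiniteMeasure ω] {μ : Measure Y} [IsFiniteMeasure μ]
    {gs : ℕ → X → Y} {g : X → Y} (hgs : ∀ k, AEMeasurable (gs k) ω) (hg : AEMeasurable g ω)
    (hlim : ∀ᵐ x ∂ω, Tendsto (gs · x) atTop (𝓝 (g x)))
    (hμ : ∀ f : Y →ᵇ ℝ, Tendsto (fun k => ∫ y, f y ∂(ω.map (gs k))) atTop (𝓝 (∫ y, f y ∂μ))) :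
    ω.map g = μ := by
  refine ext_of_forall_integral_eq_of_IsFiniteMeasure fun f => tendsto_nhds_unique ?_ (hμ f)
  simp only [integral_map (hgs _) f.continuous.aestronglyMeasurable,
    integral_map hg f.continuous.aestronglyMeasurable]
  exact tendsto_integral_of_dominated_convergence (fun _ => ‖f‖)
    (fun k => (f.continuous.measurable.comp_aemeasurable (hgs k)).aestronglyMeasurable)
    (integrable_const _) (fun k => ae_of_all _ fun x => f.norm_coe_le_norm _)
    (hlim.mono fun x hx => (f.continuous.tendsto _).comp hx)

theorem stmt7_general {X Y : Type*} [MetricSpace X] [CompactSpace X] [MetricSpace Y]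
    [MeasurableSpace X] [BorelSpace X] [MeasurableSpace Y] [BorelSpace Y]
    (ω : Measure X) [IsFiniteMeasure ω]
    (F : Set C(X, ℝ)) (T : C(X, ℝ) → X → Set Y)
    (α β : Y → EReal) (h : ℝ → Y → C(X, ℝ))
    -- T maps F into C_s(X,Y)
    (hTCs : ∀ f ∈ F, IsCs ω (T f))
    -- T is continuous at each φ ∈ F
    (hTcont : ∀ φ ∈ F, TContinuousAt F T φ)
    -- (A3')
    (hA3b : ∀ (y : Y) (t s : ℝ), α y < (t : EReal) → (s : EReal) < β y → t ≤ s →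
      ∀ x, h s y x ≤ h t y x)
    (hA3d : ∀ (y : Y) (t : ℝ), α y < (t : EReal) → (t : EReal) < β y →
      ∀ ε : ℝ, 0 < ε → ∃ δ : ℝ, 0 < δ ∧ ∀ t' : ℝ, α y < (t' : EReal) → (t' : EReal) < β y →
        |t' - t| < δ → ∀ x, |h t' y x - h t y x| ≤ ε)
    -- discrete measures μ_l converging weakly to μ with μ_l(Y) = ω(X)
    (μs : ℕ → Measure Y) (μ : Measure Y) [IsFiniteMeasure μ]
    (hweak : ∀ fc : C(Y, ℝ),
      Tendsto (fun l => ∫ y, fc y ∂(μs l)) atTop (nhds (∫ y, fc y ∂μ)))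
    -- solutions ρ_l = max_i h_{bᵢˡ,pᵢˡ} of M_{T(ρ_l)} = μ_l
    (ρs : ℕ → C(X, ℝ)) (hρsF : ∀ l, ρs l ∈ F)
    (hρsform : ∀ l, ∃ (m : ℕ), 0 < m ∧ ∃ (q : Fin m → Y) (bb : Fin m → ℝ),
      (∀ i, α (q i) < (bb i : EReal) ∧ (bb i : EReal) < β (q i)) ∧
      ∀ x, ρs l x = ⨆ i, h (bb i) (q i) x)
    (hρssol : ∀ l, ∀ E : Set Y, MeasurableSet E → ω (SVPreimage (T (ρs l)) E) = μs l E)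
    -- R₀ in the range of every ρ_l, with R₀ < lim_{t→α_y⁺} h_{t,y}(x)
    (R₀ : ℝ) (hR₀pos : 0 < R₀) (hR₀range : ∀ l, ∃ x, ρs l x = R₀)
    (hR₀lim : ∀ (x : X) (y : Y), ∃ t : ℝ, α y < (t : EReal) ∧ (t : EReal) < β y ∧
      R₀ < h t y x)
    -- (i)
    (hi : ∀ R₁ : ℝ, 0 < R₁ → ∃ C : ℝ, 0 < C ∧ ∀ (y : Y) (t : ℝ),
      α y < (t : EReal) → (t : EReal) < β y → (∃ x, h t y x = R₁) →
      ∀ x, C⁻¹ ≤ h t y x ∧ h t y x ≤ C)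
    -- (ii)
    (hii : ∀ C₀ C₁ : ℝ, 0 < C₀ → C₀ < C₁ →
      IsCompact {f : C(X, ℝ) | f ∈ F ∧ ∀ x, C₀ ≤ f x ∧ f x ≤ C₁}) :
    ∃ ρ : C(X, ℝ), ρ ∈ F ∧ ∀ E : Set Y, MeasurableSet E → ω (SVPreimage (T ρ) E) = μ E := by
  set I : Y → Set ℝ := fun y => ((↑) : ℝ → EReal) ⁻¹' Set.Ioo (α y) (β y)
  have hI : ∀ y, (I y).OrdConnected := fun y =>
    Set.ordConnected_Ioo.preimage_mono EReal.coe_strictMono.monotone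
  have hmono : ∀ y x, AntitoneOn (fun t => h t y x) (I y) := fun y x t ht s hs hts =>
    hA3b y t s ht.1 hs.2 hts x
  have hcont : ∀ y x, ContinuousOn (fun t => h t y x) (I y) := fun y x =>
    Metric.continuousOn_iff.2 fun t ht ε hε => by
      obtain ⟨δ, hδ, hδt⟩ := hA3d y t ht.1 ht.2 (ε / 2) (half_pos hε)
      exact ⟨δ, hδ, fun t' ht' hd => (hδt t' ht'.1 ht'.2 hd x).trans_lt (half_lt_self hε)⟩
  obtain ⟨C, hC, hCbound⟩ := hi R₀ hR₀pos
  have hbound : ∀ l x, C⁻¹ ≤ ρs l x ∧ ρs l x ≤ C := fun l => by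
    obtain ⟨m, hm, q, b, hb, hρ⟩ := hρsform l
    obtain ⟨x₀, hx₀⟩ := hR₀range l
    have : Nonempty (Fin m) := ⟨⟨0, hm⟩⟩
    exact inv_le_and_le_of_eq_iSup hmono hcont
      (fun x y => let ⟨t, hαt, htβ, ht⟩ := hR₀lim x y; ⟨t, ⟨hαt, htβ⟩, ht⟩)
      (fun y t ht => hCbound y t ht.1 ht.2) hb hρ hx₀
  obtain ⟨ρ, ⟨hρF, -⟩, s, hs, hρ⟩ :=
    (hii C⁻¹ (C⁻¹ + C) (inv_pos.2 hC) (lt_add_of_pos_right _ hC)).tendsto_subseq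
      fun l => ⟨hρsF l, fun x =>
        ⟨(hbound l x).1, (hbound l x).2.trans (le_add_of_nonneg_left (inv_pos.2 hC).le)⟩⟩
  choose gs hgs hgs_mem hgs_ae using fun k =>
    (hTCs _ (hρsF (s k))).exists_aemeasurable_selection
  obtain ⟨g, hg, -, hg_ae⟩ := (hTCs ρ hρF).exists_aemeasurable_selection
  have hmap : ∀ k, ω.map (gs k) = μs (s k) := fun k => Measure.ext fun E hE => by
    rw [map_apply_eq_measure_svPreimage (hgs k) (hgs_ae k) hE, hρssol _ E hE]
  have hlim : ∀ᵐ x ∂ω, Tendsto (gs · x) atTop (𝓝 (g x)) := hg_ae.mono fun x hx =>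
    (hTcont ρ hρF).tendsto_of_eq_singleton (fun k => hρsF _) hρ hx fun k => hgs_mem k x
  have hμ : ω.map g = μ := map_eq_of_tendsto_ae_of_tendsto_integral hgs hg hlim fun f => by
    simp only [hmap]
    exact (hweak f.toContinuousMap).comp hs.tendsto_atTop
  exact ⟨ρ, hρF, fun E hE => by rw [← map_apply_eq_measure_svPreimage hg hg_ae hE, hμ]⟩

/-- Theorem 2.11 (convex case, general target measure, by approximation). -/
theorem stmt7 {X Y : Type*} [MetricSpace X] [CompactSpace X] [MetricSpace Y] [CompactSpace Y]
    [MeasurableSpace X] [BorelSpace X] [MeasurableSpace Y] [BorelSpace Y]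
    (ω : Measure X) [IsFiniteMeasure ω]
    (F : Set C(X, ℝ)) (T : C(X, ℝ) → X → Set Y)
    (α β : Y → EReal) (h : ℝ → Y → C(X, ℝ))
    -- F ⊆ C⁺(X)
    (hFpos : ∀ f ∈ F, ∀ x, 0 < f x)
    -- (A1')
    (hA1 : ∀ f₁ ∈ F, ∀ f₂ ∈ F, f₁ ⊔ f₂ ∈ F)
    -- T maps F into C_s(X,Y)
    (hTCs : ∀ f ∈ F, IsCs ω (T f))
    -- T is continuous at each φ ∈ F
    (hTcont : ∀ φ ∈ F, TContinuousAt F T φ)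
    -- (A2')
    (hA2 : ∀ φ₁ ∈ F, ∀ φ₂ ∈ F, ∀ x₀ : X, φ₂ x₀ ≤ φ₁ x₀ → T φ₁ x₀ ⊆ T (φ₁ ⊔ φ₂) x₀)
    -- (A3')
    (hA3mem : ∀ (y : Y) (t : ℝ), α y < (t : EReal) → (t : EReal) < β y → h t y ∈ F)
    (hA3a : ∀ (y : Y) (t : ℝ), α y < (t : EReal) → (t : EReal) < β y → ∀ x : X, y ∈ T (h t y) x)
    (hA3b : ∀ (y : Y) (t s : ℝ), α y < (t : EReal) → (s : EReal) < β y → t ≤ s →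
      ∀ x, h s y x ≤ h t y x)
    (hA3c : ∀ (y : Y), ∀ ε : ℝ, 0 < ε → ∃ t₀ : ℝ, α y < (t₀ : EReal) ∧ (t₀ : EReal) < β y ∧
      ∀ t : ℝ, t₀ ≤ t → (t : EReal) < β y → ∀ x, h t y x < ε)
    (hA3d : ∀ (y : Y) (t : ℝ), α y < (t : EReal) → (t : EReal) < β y →
      ∀ ε : ℝ, 0 < ε → ∃ δ : ℝ, 0 < δ ∧ ∀ t' : ℝ, α y < (t' : EReal) → (t' : EReal) < β y →
        |t' - t| < δ → ∀ x, |h t' y x - h t y x| ≤ ε)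
    -- discrete measures μ_l converging weakly to μ with μ_l(Y) = ω(X)
    (μs : ℕ → Measure Y) (μ : Measure Y) [IsFiniteMeasure μ] [∀ l, IsFiniteMeasure (μs l)]
    (hdiscr : ∀ l, ∃ (m : ℕ) (q : Fin m → Y) (c : Fin m → ENNReal),
      μs l = ∑ i, c i • Measure.dirac (q i))
    (hweak : ∀ fc : C(Y, ℝ),
      Tendsto (fun l => ∫ y, fc y ∂(μs l)) atTop (nhds (∫ y, fc y ∂μ)))
    (hmassl : ∀ l, μs l Set.univ = ω Set.univ)
    -- solutions ρ_l = max_i h_{bᵢˡ,pᵢˡ} of M_{T(ρ_l)} = μ_l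
    (ρs : ℕ → C(X, ℝ)) (hρsF : ∀ l, ρs l ∈ F)
    (hρsform : ∀ l, ∃ (m : ℕ), 0 < m ∧ ∃ (q : Fin m → Y) (bb : Fin m → ℝ),
      (∀ i, α (q i) < (bb i : EReal) ∧ (bb i : EReal) < β (q i)) ∧
      ∀ x, ρs l x = ⨆ i, h (bb i) (q i) x)
    (hρssol : ∀ l, ∀ E : Set Y, MeasurableSet E → ω (SVPreimage (T (ρs l)) E) = μs l E)
    -- R₀ in the range of every ρ_l, with R₀ < lim_{t→α_y⁺} h_{t,y}(x)
    (R₀ : ℝ) (hR₀pos : 0 < R₀) (hR₀range : ∀ l, ∃ x, ρs l x = R₀)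
    (hR₀lim : ∀ (x : X) (y : Y), ∃ t : ℝ, α y < (t : EReal) ∧ (t : EReal) < β y ∧
      R₀ < h t y x)
    -- (i)
    (hi : ∀ R₁ : ℝ, 0 < R₁ → ∃ C : ℝ, 0 < C ∧ ∀ (y : Y) (t : ℝ),
      α y < (t : EReal) → (t : EReal) < β y → (∃ x, h t y x = R₁) →
      ∀ x, C⁻¹ ≤ h t y x ∧ h t y x ≤ C)
    -- (ii)
    (hii : ∀ C₀ C₁ : ℝ, 0 < C₀ → C₀ < C₁ →
      IsCompact {f : C(X, ℝ) | f ∈ F ∧ ∀ x, C₀ ≤ f x ∧ f x ≤ C₁}) :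
    ∃ ρ : C(X, ℝ), ρ ∈ F ∧ ∀ E : Set Y, MeasurableSet E → ω (SVPreimage (T ρ) E) = μ E :=
  stmt7_general ω F T α β h hTCs hTcont hA3b hA3d μs μ hweak ρs hρsF hρsform hρssol R₀ hR₀pos
    hR₀range hR₀lim hi hii
end
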